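/- arXiv:2108.02402 — 8 statements merged into one kernel-verified Lean document; each statement's English description precedes it below -/
import Mathlib

section
/- Let k ≥ 2 be an integer. Define f : ℕ × ℕ × ℕ → ZMod (4k) by f(u,v,w) = u + (2k+1)·v + (4k−2)·w. Let S be the finite set S = {(0,0,w) : 0 ≤ w ≤ 2k−1} ∪ {(1,0,w) : 0 ≤ w ≤ k−1} ∪ {(0,1,w) : 0 ≤ w ≤ k−1}. Then the restriction of f to S is a bijection from S onto ZMod (4k). -/
private lemma stmt3_dvd (k : ℕ) {N1 N2 : ℕ} (h : (N1 : ZMod (4*k)) = N2) :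
    (4*(k:ℤ)) ∣ (N2 : ℤ) - N1 := by
  have := Nat.modEq_iff_dvd.mp ((ZMod.natCast_eq_natCast_iff _ _ _).mp h)
  push_cast at this
  exact this

theorem stmt_3 (k : ℕ) (hk : 2 ≤ k) :
    Set.BijOn
      (fun p : ℕ × ℕ × ℕ =>
        (p.1 : ZMod (4 * k)) + (2 * k + 1 : ℕ) * p.2.1 + (4 * k - 2 : ℕ) * p.2.2)
      ({p | ∃ w ≤ 2 * k - 1, p = (0, 0, w)} ∪
       {p | ∃ w ≤ k - 1, p = (1, 0, w)} ∪
       {p | ∃ w ≤ k - 1, p = (0, 1, w)})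
      Set.univ := by
  haveI : NeZero (4*k) := ⟨by omega⟩
  have h24 : 2 ≤ 4*k := by omega
  have hfun : (fun p : ℕ × ℕ × ℕ =>
        (p.1 : ZMod (4 * k)) + (2 * k + 1 : ℕ) * p.2.1 + (4 * k - 2 : ℕ) * p.2.2)
      = fun p : ℕ × ℕ × ℕ =>
        ((p.1 + (2*k+1)*p.2.1 + (4*k-2)*p.2.2 : ℕ) : ZMod (4*k)) := by
    funext p
    push_cast [Nat.cast_sub h24]
    ring
  rw [hfun]
  refine ⟨Set.mapsTo_univ _ _, ?_, ?_⟩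
  · -- InjOn
    rintro p1 hp1 p2 hp2 h
    simp only at h
    obtain ((⟨w1, hw1, rfl⟩ | ⟨w1, hw1, rfl⟩) | ⟨w1, hw1, rfl⟩) := hp1 <;>
      obtain ((⟨w2, hw2, rfl⟩ | ⟨w2, hw2, rfl⟩) | ⟨w2, hw2, rfl⟩) := hp2 <;>
      obtain ⟨c, hc⟩ := stmt3_dvd k h <;>
      push_cast [Nat.cast_sub h24] at hc
    · -- (0,0,w1) vs (0,0,w2)
      have h4 : (4*(k:ℤ)) ∣ 2*(w1:ℤ) - 2*w2 :=
        ⟨c + w1 - w2, by linear_combination hc⟩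
      have h0 := Int.eq_zero_of_abs_lt_dvd h4
        (abs_lt.mpr ⟨by omega, by omega⟩)
      have : w1 = w2 := by omega
      subst this; rfl
    · -- (0,0,w1) vs (1,0,w2)
      have h3 : (2:ℤ) ∣ 1 :=
        ⟨2*k*c - 2*k*w2 + 2*k*w1 + w2 - w1, by linear_combination hc⟩
      omega
    · -- (0,0,w1) vs (0,1,w2)
      have h3 : (2:ℤ) ∣ 1 :=
        ⟨2*k*c - k - 2*k*w2 + 2*k*w1 + w2 - w1, by linear_combination hc⟩
      omega
    · -- (1,0,w1) vs (0,0,w2)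
      have h3 : (2:ℤ) ∣ 1 :=
        ⟨2*k*w2 - w2 - 2*k*w1 + w1 - 2*k*c, by linear_combination -hc⟩
      omega
    · -- (1,0,w1) vs (1,0,w2)
      have h4 : (4*(k:ℤ)) ∣ 2*(w1:ℤ) - 2*w2 :=
        ⟨c + w1 - w2, by linear_combination hc⟩
      have h0 := Int.eq_zero_of_abs_lt_dvd h4
        (abs_lt.mpr ⟨by omega, by omega⟩)
      have : w1 = w2 := by omega
      subst this; rfl
    · -- (1,0,w1) vs (0,1,w2)
      have h4 : (4*(k:ℤ)) ∣ 2*k + 2*(w1:ℤ) - 2*w2 :=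
        ⟨c - w2 + w1, by linear_combination hc⟩
      have h0 := Int.eq_zero_of_abs_lt_dvd h4
        (abs_lt.mpr ⟨by omega, by omega⟩)
      omega
    · -- (0,1,w1) vs (0,0,w2)
      have h3 : (2:ℤ) ∣ 1 :=
        ⟨2*k*w2 - w2 - k - 2*k*w1 + w1 - 2*k*c, by linear_combination -hc⟩
      omega
    · -- (0,1,w1) vs (1,0,w2)
      have h4 : (4*(k:ℤ)) ∣ 2*k + 2*(w2:ℤ) - 2*w1 :=
        ⟨-c - w1 + w2, by linear_combination -hc⟩
      have h0 := Int.eq_zero_of_abs_lt_dvd h4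
        (abs_lt.mpr ⟨by omega, by omega⟩)
      omega
    · -- (0,1,w1) vs (0,1,w2)
      have h4 : (4*(k:ℤ)) ∣ 2*(w1:ℤ) - 2*w2 :=
        ⟨c + w1 - w2, by linear_combination hc⟩
      have h0 := Int.eq_zero_of_abs_lt_dvd h4
        (abs_lt.mpr ⟨by omega, by omega⟩)
      have : w1 = w2 := by omega
      subst this; rfl
  · -- SurjOn
    intro a _
    obtain ⟨n, hn, ha⟩ : ∃ n < 4*k, (n : ZMod (4*k)) = a :=
      ⟨a.val, a.val_lt, by simp [ZMod.natCast_val, ZMod.cast_id]⟩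
    have cast_eq : ∀ c : ℕ, ((n + 4*k*c : ℕ) : ZMod (4*k)) = a := by
      intro c
      rw [Nat.cast_add, Nat.cast_mul, ZMod.natCast_self, zero_mul, add_zero, ha]
    rcases Nat.even_or_odd n with ⟨m, hm⟩ | ⟨m, hm⟩
    · rcases Nat.eq_zero_or_pos m with rfl | hm1
      · refine ⟨(0, 0, 0), Or.inl (Or.inl ⟨0, by omega, rfl⟩), ?_⟩
        have hn0 : n = 0 := by omega
        subst hn0
        simpa using ha
      · refine ⟨(0, 0, 2*k - m), Or.inl (Or.inl ⟨2*k - m, by omega, rfl⟩), ?_⟩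
        have key : (0 + (2*k+1)*0 + (4*k-2)*(2*k - m) : ℕ) = n + 4*k*(2*k - m - 1) := by
          zify [h24, (by omega : m ≤ 2*k), (by omega : 1 ≤ 2*k - m), (by omega : m + 1 ≤ 2*k)]
          linear_combination (-1 : ℤ) * (by omega : (n:ℤ) = m + m)
        simpa only [key] using cast_eq _
    · rcases Nat.eq_zero_or_pos m with rfl | hm1
      · refine ⟨(1, 0, 0), Or.inl (Or.inr ⟨0, by omega, rfl⟩), ?_⟩
        have hn0 : n = 1 := by omega
        subst hn0
        simpa using ha
      · by_cases hmk : m ≤ k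
        · refine ⟨(0, 1, k - m), Or.inr ⟨k - m, by omega, rfl⟩, ?_⟩
          have key : (0 + (2*k+1)*1 + (4*k-2)*(k - m) : ℕ) = n + 4*k*(k - m) := by
            zify [h24, (by omega : m ≤ k)]
            linear_combination (-1 : ℤ) * (by omega : (n:ℤ) = 2*m + 1)
          simpa only [key] using cast_eq _
        · refine ⟨(1, 0, 2*k - m), Or.inl (Or.inr ⟨2*k - m, by omega, rfl⟩), ?_⟩
          have key : (1 + (2*k+1)*0 + (4*k-2)*(2*k - m) : ℕ) = n + 4*k*(2*k - m - 1) := by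
            zify [h24, (by omega : m ≤ 2*k), (by omega : 1 ≤ 2*k - m), (by omega : m + 1 ≤ 2*k)]
            linear_combination (-1 : ℤ) * (by omega : (n:ℤ) = 2*m + 1)
          simpa only [key] using cast_eq _
end

section
/- Let r > a ≥ 1 be coprime integers and let d ≥ 2 be an integer. Define f : ℕ × ℕ × ℕ → ZMod (d·r) by f(u,v,w) = u + (d·r−1)·v + (a·d)·w. Let S be the finite set S = {(u,0,0) : 0 ≤ u ≤ a·d−1} ∪ {(0,0,1)} ∪ {(0,v,0) : 1 ≤ v ≤ d·r−a·d−1}. Then the restriction of f to S is a bijection from S onto ZMod (d·r). -/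
theorem stmt_4 (r a d : ℕ) (ha : 1 ≤ a) (har : a < r) (hd : 2 ≤ d)
    (hcop : Nat.Coprime r a) :
    Set.BijOn
      (fun p : ℕ × ℕ × ℕ =>
        (p.1 : ZMod (d * r)) + (d * r - 1 : ℕ) * p.2.1 + (a * d : ℕ) * p.2.2)
      ({p | ∃ u ≤ a * d - 1, p = (u, 0, 0)} ∪
       {(0, 0, 1)} ∪
       {p | ∃ v, 1 ≤ v ∧ v ≤ d * r - a * d - 1 ∧ p = (0, v, 0)})
      Set.univ := by
  have hd0 : 0 < d := by omega
  have had : a * d < d * r := by nlinarith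
  have had1 : 0 < a * d := Nat.mul_pos (by omega) hd0
  have hn2 : 2 ≤ d * r := by nlinarith
  haveI : NeZero (d * r) := ⟨by omega⟩
  have hm1 : ((d * r - 1 : ℕ) : ZMod (d * r)) = -1 := by
    have h1 : ((d * r - 1 : ℕ) : ZMod (d * r)) = ((d * r : ℕ) : ZMod (d * r)) - 1 := by
      rw [Nat.cast_sub (by omega : 1 ≤ d * r)]; simp
    simp [h1]
  set g : ZMod (d * r) → ℕ × ℕ × ℕ := fun x =>
    if x.val < a * d then (x.val, 0, 0)
    else if x.val = a * d then (0, 0, 1)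
    else (0, d * r - x.val, 0) with hg
  have hright : ∀ x : ZMod (d * r),
      (fun p : ℕ × ℕ × ℕ =>
        (p.1 : ZMod (d * r)) + (d * r - 1 : ℕ) * p.2.1 + (a * d : ℕ) * p.2.2) (g x) = x := by
    intro x
    have hvx : ((x.val : ℕ) : ZMod (d * r)) = x := by
      simp [ZMod.natCast_val, ZMod.cast_id]
    simp only [hg]
    by_cases h1 : x.val < a * d
    · simp [h1, hvx]
    · by_cases h2 : x.val = a * d
      · simp only [h1, if_false, h2, if_true]
        simp [← h2, hvx]
      · have hlt : x.val < d * r := ZMod.val_lt x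
        simp only [h1, if_false, h2, if_false]
        have hc : ((d * r - x.val : ℕ) : ZMod (d * r)) = -x := by
          rw [Nat.cast_sub (le_of_lt hlt)]
          simp [hvx]
        simp [hm1, hc, hvx]
  refine Set.InvOn.bijOn (f' := g) ⟨?_, fun x _ => hright x⟩ (Set.mapsTo_univ _ _) ?_
  · -- LeftInvOn g f S
    rintro p hp
    simp only [Set.mem_union, Set.mem_setOf_eq, Set.mem_singleton_iff] at hp
    rcases hp with ((⟨u, hu, rfl⟩ | rfl) | ⟨v, hv1, hv2, rfl⟩)
    · 
      have hult : u < a * d := by omega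
      have hval : ((u : ZMod (d * r))).val = u := ZMod.val_cast_of_lt (by omega)
      simp [hg, hval, hult]
    · have hval : (((a * d : ℕ) : ZMod (d * r))).val = a * d :=
        ZMod.val_cast_of_lt had
      simp only [hg, Nat.cast_zero, Nat.cast_one, mul_zero, mul_one, add_zero, zero_add]
      rw [hval]
      simp
    · have hvlt : v < d * r := by omega
      have hc : ((d * r - 1 : ℕ) : ZMod (d * r)) * (v : ZMod (d * r)) =
          ((d * r - v : ℕ) : ZMod (d * r)) := by
        rw [hm1, Nat.cast_sub (le_of_lt hvlt)]
        simp
      have hval : (((d * r - v : ℕ) : ZMod (d * r))).val = d * r - v :=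
        ZMod.val_cast_of_lt (by omega)
      have h1 : ¬ (d * r - v < a * d) := by omega
      have h2 : ¬ (d * r - v = a * d) := by omega
      have h3 : d * r - (d * r - v) = v := by omega
      simp [hg, hc, hval, h1, h2, h3]
  · -- MapsTo g univ S
    intro x _
    by_cases h1 : x.val < a * d
    · left; left
      exact ⟨x.val, by omega, by simp [hg, h1]⟩
    · by_cases h2 : x.val = a * d
      · left; right
        simp [hg, h1, h2]
      · right
        have hlt : x.val < d * r := ZMod.val_lt x
        exact ⟨d * r - x.val, by omega, by omega, by simp [hg, h1, h2]⟩
end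

section
/- Let k ≥ 2 be an integer. In the Laurent polynomial ring L = AddMonoidAlgebra ℂ (Fin 3 → ℤ) (Laurent polynomials over ℂ in three variables x, y, z), consider the four monomials A = x²z^{−(2k−1)}, B = y²z^{−(2k−1)}, C = x y^{−1} z^{k}, D = x^{−1} y z^{k}, i.e., the monomials with exponent vectors (2,0,1−2k), (0,2,1−2k), (1,−1,k), (−1,1,k). Then the ℂ-subalgebra of L generated by {A, B, C, D} is isomorphic as a ℂ-algebra to MvPolynomial (Fin 4) ℂ modulo the ideal generated by X·W − Y·Z (where X, Y, Z, W denote the four polynomial variables, sent to A, B, C, D respectively). -/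
open MvPolynomial

/-! Sending `X s` to the Laurent monomial with exponent `v s` maps `X^m` to the monomial with
exponent `∑ m s • v s`. Since `v 0 + v 3 = v 1 + v 2`, the binomial `X 0 * X 3 - X 1 * X 2`
lies in the kernel. Conversely, repeatedly trading `X 0 * X 3` for `X 1 * X 2` reduces any
polynomial, modulo the binomial, to one none of whose monomials is divisible by `X 0 * X 3`; on
such exponents `m ↦ ∑ m s • v s` is injective (here `k ≠ 0` is needed), so a reduced polynomial
in the kernel vanishes. The first isomorphism theorem then identifies the quotient with the
image, which is the algebra generated by `A, B, C, D`. -/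

theorem AlgHom.exists_quotientAlgEquiv_of_ker_eq_of_range_eq {R A B : Type*} [CommSemiring R]
    [CommRing A] [Algebra R A] [Semiring B] [Algebra R B] (f : A →ₐ[R] B) {I : Ideal A}
    (hI : RingHom.ker f = I) {S : Subalgebra R B} (hS : f.range = S) :
    ∃ e : (A ⧸ I) ≃ₐ[R] S, ∀ x, (e (Ideal.Quotient.mk I x) : B) = f x := by
  subst hI hS
  exact ⟨Ideal.quotientKerEquivRange f, fun _ => rfl⟩

namespace MvPolynomial

variable {σ R M : Type*} [CommRing R]

theorem exists_support_subset_monomial_sub_mem_span {i j k l : σ} (hij : i ≠ j) (hki : k ≠ i)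
    (hli : l ≠ i) (m : σ →₀ ℕ) (c : R) :
    ∃ r : MvPolynomial σ R, ↑r.support ⊆ {m : σ →₀ ℕ | m i = 0 ∨ m j = 0} ∧
      monomial m c - r ∈ Ideal.span {X i * X j - X k * X l} := by
  classical
  have of_reduced {m : σ →₀ ℕ} (hm : m i = 0 ∨ m j = 0) :
      ∃ r : MvPolynomial σ R, ↑r.support ⊆ {m : σ →₀ ℕ | m i = 0 ∨ m j = 0} ∧
        monomial m c - r ∈ Ideal.span {X i * X j - X k * X l} :=
    ⟨monomial m c, fun _ h => by rwa [Finset.mem_singleton.mp (support_monomial_subset h)],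
      by simp⟩
  induction hn : m i generalizing m with
  | zero => exact of_reduced (.inl hn)
  | succ n ih =>
    by_cases hj : m j = 0
    · exact of_reduced (.inr hj)
    set m' := m - (Finsupp.single i 1 + Finsupp.single j 1)
    have hm : m = m' + Finsupp.single i 1 + Finsupp.single j 1 := by
      ext s
      simp only [m', Finsupp.add_apply, Finsupp.tsub_apply, Finsupp.single_apply]
      split_ifs <;> grind
    obtain ⟨r, hr, hmr⟩ := ih (m' + Finsupp.single k 1 + Finsupp.single l 1) (by
      simp [m', hki, hli, hij.symm, hn])
    refine ⟨r, hr, ?_⟩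
    have hstep : monomial m c - r =
        (X i * X j - X k * X l) * monomial m' c +
          (monomial (m' + Finsupp.single k 1 + Finsupp.single l 1) c - r) := by
      rw [hm]
      simp only [monomial_add_single, pow_one]
      ring
    rw [hstep]
    exact add_mem (Ideal.mul_mem_right _ _ (Ideal.mem_span_singleton_self _)) hmr

theorem exists_support_subset_sub_mem_span {i j k l : σ} (hij : i ≠ j) (hki : k ≠ i)
    (hli : l ≠ i) (p : MvPolynomial σ R) :
    ∃ r : MvPolynomial σ R, ↑r.support ⊆ {m : σ →₀ ℕ | m i = 0 ∨ m j = 0} ∧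
      p - r ∈ Ideal.span {X i * X j - X k * X l} := by
  classical
  induction p using induction_on' with
  | monomial m c => exact exists_support_subset_monomial_sub_mem_span hij hki hli m c
  | add p q hp hq =>
    obtain ⟨r, hr, hpr⟩ := hp
    obtain ⟨s, hs, hqs⟩ := hq
    refine ⟨r + s, fun m hm => ?_, by simpa [add_sub_add_comm] using add_mem hpr hqs⟩
    rcases Finset.mem_union.mp (support_add hm) with h | h
    exacts [hr h, hs h]

variable [AddCommMonoid M]

theorem aeval_single_eq_mapDomainAlgHom (v : σ → M) :
    (aeval (R := R) fun s => AddMonoidAlgebra.single (v s) (1 : R)) =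
      AddMonoidAlgebra.mapDomainAlgHom R R (Finsupp.linearCombination ℕ v).toAddMonoidHom := by
  refine algHom_ext fun s => ?_
  rw [aeval_X]
  refine Eq.trans ?_ (AddMonoidAlgebra.mapDomain_single ..).symm
  simp

theorem eq_zero_of_aeval_single_eq_zero {v : σ → M} {S : Set (σ →₀ ℕ)}
    (hv : Set.InjOn (Finsupp.linearCombination ℕ v) S) {p : MvPolynomial σ R}
    (hp : ↑p.support ⊆ S)
    (h : aeval (R := R) (fun s => AddMonoidAlgebra.single (v s) (1 : R)) p = 0) :
    p = 0 := by
  rw [aeval_single_eq_mapDomainAlgHom] at h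
  exact AddMonoidAlgebra.coeff_injective <| Finsupp.mapDomain_injOn S hv hp (by simp)
    ((congrArg AddMonoidAlgebra.coeff h).trans Finsupp.mapDomain_zero.symm)

theorem ker_aeval_single_eq_span {v : σ → M} {i j k l : σ} (hij : i ≠ j) (hki : k ≠ i)
    (hli : l ≠ i) (hrel : v i + v j = v k + v l)
    (hv : Set.InjOn (Finsupp.linearCombination ℕ v) {m | m i = 0 ∨ m j = 0}) :
    RingHom.ker (aeval (R := R) fun s => AddMonoidAlgebra.single (v s) (1 : R)) =
      Ideal.span {X i * X j - X k * X l} := by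
  have hspan : Ideal.span {(X i * X j - X k * X l : MvPolynomial σ R)} ≤
      RingHom.ker (aeval (R := R) fun s => AddMonoidAlgebra.single (v s) (1 : R)) := by
    rw [Ideal.span_le, Set.singleton_subset_iff, SetLike.mem_coe, RingHom.mem_ker]
    simp [AddMonoidAlgebra.single_mul_single, hrel]
  refine le_antisymm (fun p hp => ?_) hspan
  obtain ⟨r, hr, hpr⟩ := exists_support_subset_sub_mem_span (R := R) hij hki hli p
  have hr0 : r = 0 := by
    refine eq_zero_of_aeval_single_eq_zero hv hr ?_
    simpa using sub_mem hp (hspan hpr)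
  simpa [hr0] using hpr

end MvPolynomial

def chartExponent (k : ℕ) : Fin 4 → Fin 3 → ℤ :=
  ![![2, 0, 1 - 2 * (k : ℤ)], ![0, 2, 1 - 2 * (k : ℤ)],
    ![1, -1, (k : ℤ)], ![-1, 1, (k : ℤ)]]

theorem chartExponent_add (k : ℕ) :
    chartExponent k 0 + chartExponent k 3 = chartExponent k 1 + chartExponent k 2 := by
  funext j
  fin_cases j <;> simp [chartExponent]

theorem linearCombination_chartExponent (k : ℕ) (m : Fin 4 →₀ ℕ) :
    Finsupp.linearCombination ℕ (chartExponent k) m =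
      ![2 * (m 0 : ℤ) + m 2 - m 3, 2 * (m 1 : ℤ) - m 2 + m 3,
        (1 - 2 * (k : ℤ)) * (m 0 + m 1) + k * (m 2 + m 3)] := by
  funext j
  fin_cases j <;>
    simp [Finsupp.linearCombination_apply, Finsupp.sum_fintype, Fin.sum_univ_four, chartExponent] <;>
    ring

theorem injOn_linearCombination_chartExponent {k : ℕ} (hk : k ≠ 0) :
    Set.InjOn (Finsupp.linearCombination ℕ (chartExponent k)) {m | m 0 = 0 ∨ m 3 = 0} := by
  intro m hm m' hm' h
  simp only [Set.mem_ofPred_eq] at hm hm'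
  simp only [linearCombination_chartExponent, funext_iff, Fin.forall_fin_succ] at h
  obtain ⟨h0, h1, h2, -⟩ := h
  simp only [Matrix.cons_val_zero, Matrix.cons_val_succ] at h0 h1 h2
  have hsum01 : (m 0 : ℤ) + m 1 = m' 0 + m' 1 := by linarith
  have hsum23 : (m 2 : ℤ) + m 3 = m' 2 + m' 3 :=
    mul_left_cancel₀ (Int.natCast_ne_zero.mpr hk) <| by
      linear_combination h2 - (1 - 2 * (k : ℤ)) * hsum01
  -- on exponents with `m 0 = 0 ∨ m 3 = 0`, the two sums and `h0` determine all four entries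
  ext i
  fin_cases i <;> simp <;> omega

theorem stmt_5 (k : ℕ) (hk : 2 ≤ k)
    (A B C D : AddMonoidAlgebra ℂ (Fin 3 → ℤ))
    (hA : A = AddMonoidAlgebra.single ![2, 0, 1 - 2 * (k : ℤ)] 1)
    (hB : B = AddMonoidAlgebra.single ![0, 2, 1 - 2 * (k : ℤ)] 1)
    (hC : C = AddMonoidAlgebra.single ![1, -1, (k : ℤ)] 1)
    (hD : D = AddMonoidAlgebra.single ![-1, 1, (k : ℤ)] 1) :
    ∃ e : (MvPolynomial (Fin 4) ℂ ⧸
        Ideal.span {(X 0 * X 3 - X 1 * X 2 : MvPolynomial (Fin 4) ℂ)}) ≃ₐ[ℂ]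
        Algebra.adjoin ℂ ({A, B, C, D} : Set (AddMonoidAlgebra ℂ (Fin 3 → ℤ))),
      (e (Ideal.Quotient.mk _ (X 0)) : AddMonoidAlgebra ℂ (Fin 3 → ℤ)) = A ∧
      (e (Ideal.Quotient.mk _ (X 1)) : AddMonoidAlgebra ℂ (Fin 3 → ℤ)) = B ∧
      (e (Ideal.Quotient.mk _ (X 2)) : AddMonoidAlgebra ℂ (Fin 3 → ℤ)) = C ∧
      (e (Ideal.Quotient.mk _ (X 3)) : AddMonoidAlgebra ℂ (Fin 3 → ℤ)) = D := by
  set f := aeval (R := ℂ) fun s => AddMonoidAlgebra.single (chartExponent k s) (1 : ℂ)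
  have hker : RingHom.ker f = Ideal.span {X 0 * X 3 - X 1 * X 2} :=
    ker_aeval_single_eq_span (by decide) (by decide) (by decide) (chartExponent_add k)
      (injOn_linearCombination_chartExponent (by omega))
  have hrange : f.range = Algebra.adjoin ℂ {A, B, C, D} := by
    rw [← Algebra.adjoin_range_eq_range_aeval]
    congr 1
    ext x
    simp [Fin.exists_fin_succ, chartExponent, hA, hB, hC, hD, eq_comm]
  obtain ⟨e, he⟩ := f.exists_quotientAlgEquiv_of_ker_eq_of_range_eq hker hrange
  refine ⟨e, ?_, ?_, ?_, ?_⟩ <;> rw [he, aeval_X, chartExponent] <;> simp [hA, hB, hC, hD]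
end

section
/- Let r > a ≥ 1 be coprime integers and let d ≥ 2 be an integer. In the Laurent polynomial ring L = AddMonoidAlgebra ℂ (Fin 3 → ℤ) (Laurent polynomials over ℂ in three variables x, y, z), consider the four monomials A = x^{ad} z^{−1}, B = y^{rd−ad} z^{−1}, C = x^{−(ad−1)} y z, D = x y^{−(rd−ad−1)} z, i.e., the monomials with exponent vectors (ad, 0, −1), (0, rd−ad, −1), (1−ad, 1, 1), (1, ad+1−rd, 1). Then the ℂ-subalgebra of L generated by {A, B, C, D} is isomorphic as a ℂ-algebra to MvPolynomial (Fin 4) ℂ modulo the ideal generated by X·Z − Y·W (where X, Y, Z, W denote the four polynomial variables, sent to A, B, C, D respectively). -/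
/-! The map `Xᵢ ↦ t ^ vᵢ` kills `X₀X₂ - X₁X₃` because `v₀ + v₂ = v₁ + v₃`. Modulo this relation,
trading `X₀X₂` for `X₁X₃` rewrites every monomial `X ^ n` into a normal one, with `n₀ = 0` or
`n₂ = 0`, so the normal monomials span the quotient. For the four exponent vectors of the theorem
the weight `n ↦ ∑ nᵢ • vᵢ` is injective on normal exponents (an elimination that only needs
`r d ≠ 0`), so normal monomials go to distinct, hence linearly independent, Laurent monomials and
the induced map on the quotient is injective. Its image is the subalgebra generated by the `t ^ vᵢ`.
-/

open MvPolynomial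

variable {R M : Type*} [CommRing R] [AddCommMonoid M]

variable (R) in
noncomputable abbrev quadricIdeal : Ideal (MvPolynomial (Fin 4) R) :=
  Ideal.span {X 0 * X 2 - X 1 * X 3}

theorem mk_monomial_add_single_zero_add_single_two (m : Fin 4 →₀ ℕ) (c : R) :
    Ideal.Quotient.mk (quadricIdeal R)
        (monomial (m + Finsupp.single 0 1 + Finsupp.single 2 1) c) =
      Ideal.Quotient.mk (quadricIdeal R)
        (monomial (m + Finsupp.single 1 1 + Finsupp.single 3 1) c) := by
  refine Ideal.Quotient.eq.mpr (Ideal.mem_span_singleton.mpr ⟨monomial m c, ?_⟩)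
  simp only [X, monomial_mul, sub_mul, one_mul, add_comm m, add_assoc]

def normalExponents : Set (Fin 4 →₀ ℕ) := {n | n 0 = 0 ∨ n 2 = 0}

variable (R) in
noncomputable def normalMonomial (n : normalExponents) : MvPolynomial (Fin 4) R ⧸ quadricIdeal R :=
  Ideal.Quotient.mk _ (monomial n.1 1)

theorem mk_monomial_mem_span_range_normalMonomial (n : Fin 4 →₀ ℕ) :
    Ideal.Quotient.mk (quadricIdeal R) (monomial n 1) ∈
      Submodule.span R (Set.range (normalMonomial R)) := by
  induction hk : n 0 generalizing n with
  | zero => exact Submodule.subset_span ⟨⟨n, Or.inl hk⟩, rfl⟩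
  | succ k ih =>
    by_cases h2 : n 2 = 0
    · exact Submodule.subset_span ⟨⟨n, Or.inr h2⟩, rfl⟩
    obtain ⟨m, rfl⟩ : ∃ m, n = m + Finsupp.single 0 1 + Finsupp.single 2 1 := by
      refine ⟨n - Finsupp.single 0 1 - Finsupp.single 2 1, ?_⟩
      ext i
      simp only [Finsupp.coe_add, Finsupp.coe_tsub, Pi.add_apply, Pi.sub_apply,
        Finsupp.single_apply]
      split_ifs <;> subst_vars <;> omega
    rw [mk_monomial_add_single_zero_add_single_two]
    exact ih _ (by simpa using hk)

theorem span_range_normalMonomial :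
    Submodule.span R (Set.range (normalMonomial R)) = ⊤ := by
  refine Submodule.eq_top_iff'.mpr fun x => ?_
  obtain ⟨p, rfl⟩ := Ideal.Quotient.mk_surjective x
  induction p using MvPolynomial.induction_on' with
  | monomial n c =>
    rw [← mul_one c, ← smul_eq_mul, ← smul_monomial, ← Ideal.Quotient.mkₐ_eq_mk R (quadricIdeal R),
      map_smul]
    exact Submodule.smul_mem _ c (mk_monomial_mem_span_range_normalMonomial n)
  | add p q hp hq => rw [map_add]; exact add_mem hp hq

theorem aeval_single_eq_zero_of_mem_quadricIdeal (v : Fin 4 → M) (hrel : v 0 + v 2 = v 1 + v 3)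
    (p : MvPolynomial (Fin 4) R) (hp : p ∈ quadricIdeal R) :
    aeval (fun i => AddMonoidAlgebra.single (v i) (1 : R)) p = 0 := by
  obtain ⟨q, rfl⟩ := Ideal.mem_span_singleton'.mp hp
  simp [AddMonoidAlgebra.single_mul_single, hrel]

theorem aeval_single_monomial (v : Fin 4 → M) (n : Fin 4 →₀ ℕ) :
    aeval (fun i => AddMonoidAlgebra.single (v i) (1 : R)) (monomial n (1 : R)) =
      AddMonoidAlgebra.single (Finsupp.linearCombination ℕ v n) 1 := by
  simp [aeval_monomial, AddMonoidAlgebra.single_pow, Finsupp.linearCombination_apply]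

noncomputable def quadricLift (v : Fin 4 → M) (hrel : v 0 + v 2 = v 1 + v 3) :
    (MvPolynomial (Fin 4) R ⧸ quadricIdeal R) →ₐ[R] AddMonoidAlgebra R M :=
  Ideal.Quotient.liftₐ _ (aeval fun i => AddMonoidAlgebra.single (v i) 1)
    (aeval_single_eq_zero_of_mem_quadricIdeal v hrel)

theorem quadricLift_mk (v : Fin 4 → M) (hrel : v 0 + v 2 = v 1 + v 3)
    (p : MvPolynomial (Fin 4) R) :
    quadricLift v hrel (Ideal.Quotient.mk _ p) =
      aeval (fun i => AddMonoidAlgebra.single (v i) 1) p :=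
  rfl

theorem range_quadricLift (v : Fin 4 → M) (hrel : v 0 + v 2 = v 1 + v 3) :
    (quadricLift (R := R) v hrel).range =
      Algebra.adjoin R (Set.range fun i => AddMonoidAlgebra.single (v i) 1) := by
  rw [Algebra.adjoin_range_eq_range_aeval, quadricLift]
  conv_rhs => rw [← Ideal.Quotient.liftₐ_comp (quadricIdeal R)
    (aeval fun i => AddMonoidAlgebra.single (v i) 1)
    (aeval_single_eq_zero_of_mem_quadricIdeal v hrel)]
  rw [AlgHom.range_comp, (AlgHom.range_eq_top _).mpr (Ideal.Quotient.mkₐ_surjective R _),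
    Algebra.map_top]

theorem quadricLift_injective (v : Fin 4 → M) (hrel : v 0 + v 2 = v 1 + v 3)
    (hinj : Set.InjOn (Finsupp.linearCombination ℕ v) normalExponents) :
    Function.Injective (quadricLift (R := R) v hrel) := by
  refine LinearMap.injective_of_linearIndependent (f := (quadricLift v hrel).toLinearMap)
    span_range_normalMonomial ?_
  have hfamily : (quadricLift v hrel).toLinearMap ∘ normalMonomial R =
      AddMonoidAlgebra.basis M R ∘ normalExponents.domRestrict (Finsupp.linearCombination ℕ v) := by
    ext n : 1
    simp [normalMonomial, quadricLift_mk, aeval_single_monomial, AddMonoidAlgebra.basis_apply]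
  rw [hfamily]
  exact (AddMonoidAlgebra.basis M R).linearIndependent.comp _ hinj.injective

theorem injOn_linearCombination_normalExponents (p q : ℤ) (hq : q ≠ 0) :
    Set.InjOn (Finsupp.linearCombination ℕ
      ![![p, 0, -1], ![0, q - p, -1], ![1 - p, 1, 1], ![1, p + 1 - q, 1]]) normalExponents := by
  intro n hn m hm h
  have h0 : n 0 * p + n 2 * (1 - p) + n 3 = m 0 * p + m 2 * (1 - p) + m 3 := by
    simpa [Finsupp.linearCombination_apply, Finsupp.sum_fintype, Fin.sum_univ_four]
      using congrFun h 0
  have h1 : n 1 * (q - p) + n 2 + n 3 * (p + 1 - q) = m 1 * (q - p) + m 2 + m 3 * (p + 1 - q) := by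
    simpa [Finsupp.linearCombination_apply, Finsupp.sum_fintype, Fin.sum_univ_four]
      using congrFun h 1
  have h2 : -(n 0 : ℤ) - n 1 + n 2 + n 3 = -(m 0 : ℤ) - m 1 + m 2 + m 3 := by
    simpa [Finsupp.linearCombination_apply, Finsupp.sum_fintype, Fin.sum_univ_four, sub_eq_add_neg]
      using congrFun h 2
  have h02 : (n 0 : ℤ) - m 0 = n 2 - m 2 := by
    have key : q * ((n 0 - m 0) - (n 2 - m 2)) = 0 := by
      linear_combination h0 - h1 - (q - p) * h2
    linear_combination (mul_eq_zero.mp key).resolve_left hq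
  have h23 : (n 2 : ℤ) + n 3 = m 2 + m 3 := by linear_combination h0 - p * h02
  have : n 0 = m 0 ∧ n 1 = m 1 ∧ n 2 = m 2 ∧ n 3 = m 3 := by
    rcases hn with hn | hn <;> rcases hm with hm | hm <;> omega
  ext i
  fin_cases i <;> simp [this]

theorem exists_algEquiv_adjoin_single (v : Fin 4 → M) (hrel : v 0 + v 2 = v 1 + v 3)
    (hinj : Set.InjOn (Finsupp.linearCombination ℕ v) normalExponents) :
    ∃ e : (MvPolynomial (Fin 4) R ⧸ quadricIdeal R) ≃ₐ[R]
        Algebra.adjoin R (Set.range fun i => AddMonoidAlgebra.single (v i) (1 : R)),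
      ∀ i, (e (Ideal.Quotient.mk _ (X i)) : AddMonoidAlgebra R M) =
        AddMonoidAlgebra.single (v i) 1 :=
  ⟨(AlgEquiv.ofInjective _ (quadricLift_injective v hrel hinj)).trans
      (Subalgebra.equivOfEq _ _ (range_quadricLift v hrel)),
    fun i => by simp [quadricLift_mk]⟩

theorem stmt_6_general (r a d : ℕ) (har : a < r) (hd : 2 ≤ d)
    (A B C D : AddMonoidAlgebra ℂ (Fin 3 → ℤ))
    (hA : A = AddMonoidAlgebra.single ![(a * d : ℤ), 0, -1] 1)
    (hB : B = AddMonoidAlgebra.single ![0, (r * d : ℤ) - a * d, -1] 1)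
    (hC : C = AddMonoidAlgebra.single ![1 - (a * d : ℤ), 1, 1] 1)
    (hD : D = AddMonoidAlgebra.single ![1, (a * d : ℤ) + 1 - r * d, 1] 1) :
    ∃ e : (MvPolynomial (Fin 4) ℂ ⧸
        Ideal.span {(X 0 * X 2 - X 1 * X 3 : MvPolynomial (Fin 4) ℂ)}) ≃ₐ[ℂ]
        Algebra.adjoin ℂ ({A, B, C, D} : Set (AddMonoidAlgebra ℂ (Fin 3 → ℤ))),
      (e (Ideal.Quotient.mk _ (X 0)) : AddMonoidAlgebra ℂ (Fin 3 → ℤ)) = A ∧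
      (e (Ideal.Quotient.mk _ (X 1)) : AddMonoidAlgebra ℂ (Fin 3 → ℤ)) = B ∧
      (e (Ideal.Quotient.mk _ (X 2)) : AddMonoidAlgebra ℂ (Fin 3 → ℤ)) = C ∧
      (e (Ideal.Quotient.mk _ (X 3)) : AddMonoidAlgebra ℂ (Fin 3 → ℤ)) = D := by
  set v : Fin 4 → Fin 3 → ℤ := ![![(a * d : ℤ), 0, -1], ![0, (r * d : ℤ) - a * d, -1],
    ![1 - (a * d : ℤ), 1, 1], ![1, (a * d : ℤ) + 1 - r * d, 1]]
  have hrel : v 0 + v 2 = v 1 + v 3 := by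
    ext i; fin_cases i <;> simp [v]
  have hrd : (r * d : ℤ) ≠ 0 := by
    have : r ≠ 0 := by omega
    have : d ≠ 0 := by omega
    positivity
  obtain ⟨e, he⟩ := exists_algEquiv_adjoin_single (R := ℂ) v hrel
    (injOn_linearCombination_normalExponents _ _ hrd)
  have hset : Set.range (fun i => AddMonoidAlgebra.single (v i) (1 : ℂ)) = {A, B, C, D} := by
    ext x
    simp [Fin.exists_fin_succ, eq_comm, hA, hB, hC, hD, v]
  refine ⟨e.trans (Subalgebra.equivOfEq _ _ (by rw [hset])), ?_, ?_, ?_, ?_⟩ <;>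
    simp [he, hA, hB, hC, hD, v]

theorem stmt_6 (r a d : ℕ) (ha : 1 ≤ a) (har : a < r) (hd : 2 ≤ d)
    (hcop : Nat.Coprime r a)
    (A B C D : AddMonoidAlgebra ℂ (Fin 3 → ℤ))
    (hA : A = AddMonoidAlgebra.single ![(a * d : ℤ), 0, -1] 1)
    (hB : B = AddMonoidAlgebra.single ![0, (r * d : ℤ) - a * d, -1] 1)
    (hC : C = AddMonoidAlgebra.single ![1 - (a * d : ℤ), 1, 1] 1)
    (hD : D = AddMonoidAlgebra.single ![1, (a * d : ℤ) + 1 - r * d, 1] 1) :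
    ∃ e : (MvPolynomial (Fin 4) ℂ ⧸
        Ideal.span {(X 0 * X 2 - X 1 * X 3 : MvPolynomial (Fin 4) ℂ)}) ≃ₐ[ℂ]
        Algebra.adjoin ℂ ({A, B, C, D} : Set (AddMonoidAlgebra ℂ (Fin 3 → ℤ))),
      (e (Ideal.Quotient.mk _ (X 0)) : AddMonoidAlgebra ℂ (Fin 3 → ℤ)) = A ∧
      (e (Ideal.Quotient.mk _ (X 1)) : AddMonoidAlgebra ℂ (Fin 3 → ℤ)) = B ∧
      (e (Ideal.Quotient.mk _ (X 2)) : AddMonoidAlgebra ℂ (Fin 3 → ℤ)) = C ∧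
      (e (Ideal.Quotient.mk _ (X 3)) : AddMonoidAlgebra ℂ (Fin 3 → ℤ)) = D :=
  stmt_6_general r a d har hd A B C D hA hB hC hD
end

section
/- The ℂ-algebra R = MvPolynomial (Fin 4) ℂ modulo the ideal generated by X·W − Y·Z (where X, Y, Z, W denote the four polynomial variables) is not formally smooth over ℂ; equivalently (since R is finitely presented over ℂ), R is not a smooth ℂ-algebra. -/
/-!
Jacobian criterion, necessity half. If `P ⧸ (f)` is formally smooth, a section of
`P ⧸ (f)^2 → P ⧸ (f)` gives a substitution `Xᵢ ↦ Xᵢ + f qᵢ` sending `f` into `(f^2)`. By first-order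
Taylor expansion `f(X + f q) ≡ f · (1 + ∑ qᵢ ∂ᵢf) mod (f^2)`, so for a nonzerodivisor `f` the element
`1 + ∑ qᵢ ∂ᵢf` lies in `(f)`. Evaluating at a point where `f` and all `∂ᵢf` vanish gives `1 = 0`.
The cone `X₀X₃ - X₁X₂` is singular at the origin.
-/

open MvPolynomial

namespace MvPolynomial

variable {R σ : Type*} [CommRing R]

theorem exists_aeval_mem_sq_of_formallySmooth (I : Ideal (MvPolynomial σ R))
    [Algebra.FormallySmooth R (MvPolynomial σ R ⧸ I)] :
    ∃ p : σ → MvPolynomial σ R, (∀ i, p i - X i ∈ I) ∧ ∀ a ∈ I, aeval p a ∈ I ^ 2 := by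
  set π := Ideal.Quotient.mkₐ R I
  have hker : RingHom.ker π.toRingHom = I := Ideal.Quotient.mkₐ_ker R I
  obtain ⟨g, hg⟩ := (Algebra.FormallySmooth.iff_split_surjection π
    (Ideal.Quotient.mkₐ_surjective R I)).mp ‹_›
  choose p hp using fun i ↦ Ideal.Quotient.mk_surjective (g (π (X i)))
  have hcomp : (Ideal.Quotient.mkₐ R _).comp (aeval p) = g.comp π := algHom_ext fun i ↦ by
    simp only [AlgHom.comp_apply, aeval_X, Ideal.Quotient.mkₐ_eq_mk, hp i]
  refine ⟨p, fun i ↦ ?_, fun a ha ↦ ?_⟩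
  · have : π (p i) = π (X i) := by
      rw [← AlgHom.kerSquareLift_mk, hp i]
      exact congr($hg (π (X i)))
    exact Ideal.Quotient.eq.mp this
  · have : Ideal.Quotient.mk _ (aeval p a) = g (π a) := congr($hcomp a)
    rw [← hker, ← Ideal.Quotient.eq_zero_iff_mem, this,
      Ideal.Quotient.mkₐ_eq_mk, Ideal.Quotient.eq_zero_iff_mem.mpr ha, map_zero]

theorem aeval_X_add_sub_sub_sum_mul_pderiv_mem_sq [Fintype σ] {I : Ideal (MvPolynomial σ R)}
    {h : σ → MvPolynomial σ R} (hI : ∀ i, h i ∈ I) (a : MvPolynomial σ R) :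
    aeval (fun i ↦ X i + h i) a - a - ∑ i, h i * pderiv i a ∈ I ^ 2 := by
  classical
  induction a using MvPolynomial.induction_on with
  | C r => simp
  | add a b ha hb =>
    convert add_mem ha hb using 1
    simp only [map_add, Finset.sum_add_distrib, mul_add]
    ring
  | mul_X a n ha =>
    have hsum : ∑ i, h i * pderiv i (a * X n) = (∑ i, h i * pderiv i a) * X n + h n * a := by
      simp [Pi.single_apply, mul_add, Finset.sum_add_distrib, Finset.sum_mul, mul_assoc,
        mul_comm (X n), add_comm]
    have key : aeval (fun i ↦ X i + h i) (a * X n) - a * X n - ∑ i, h i * pderiv i (a * X n) =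
        (aeval (fun i ↦ X i + h i) a - a - ∑ i, h i * pderiv i a) * (X n + h n) +
          (∑ i, h i * pderiv i a) * h n := by
      rw [hsum, map_mul, aeval_X]
      ring
    have hlinear : ∑ i, h i * pderiv i a ∈ I := I.sum_mem fun i _ ↦ I.mul_mem_right _ (hI i)
    rw [key]
    exact add_mem ((I ^ 2).mul_mem_right _ ha)
      (pow_two I ▸ Ideal.mul_mem_mul hlinear (hI n))

theorem not_formallySmooth_quotient_of_singular_point [Nontrivial R] [Fintype σ]
    {f : MvPolynomial σ R} (hf : IsLeftRegular f) (x : σ → R) (hfx : eval x f = 0)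
    (hdfx : ∀ i, eval x (pderiv i f) = 0) :
    ¬ Algebra.FormallySmooth R (MvPolynomial σ R ⧸ Ideal.span {f}) := by
  intro
  obtain ⟨p, hpX, hpf⟩ := exists_aeval_mem_sq_of_formallySmooth (Ideal.span {f})
  choose q hq using fun i ↦ Ideal.mem_span_singleton.mp (hpX i)
  have hp : p = fun i ↦ X i + f * q i := by ext1 i; rw [← hq i]; ring
  have htaylor := aeval_X_add_sub_sub_sum_mul_pderiv_mem_sq
    (fun i ↦ Ideal.mul_mem_right (q i) _ (Ideal.mem_span_singleton_self f)) f
  rw [← hp] at htaylor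
  have hmem := sub_mem (hpf f (Ideal.mem_span_singleton_self f)) htaylor
  rw [Ideal.span_singleton_pow, Ideal.mem_span_singleton] at hmem
  obtain ⟨c, hc⟩ := hmem
  have hsum : f * ∑ i, q i * pderiv i f = ∑ i, f * q i * pderiv i f := by
    simp only [Finset.mul_sum, mul_assoc]
  have hunit : 1 + ∑ i, q i * pderiv i f = f * c :=
    hf (by linear_combination hc + hsum)
  simpa [hfx, hdfx] using congr(eval x $hunit)

end MvPolynomial

theorem stmt_7 :
    ¬ Algebra.FormallySmooth ℂ (MvPolynomial (Fin 4) ℂ ⧸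
        Ideal.span {(X 0 * X 3 - X 1 * X 2 : MvPolynomial (Fin 4) ℂ)}) ∧
    ¬ Algebra.Smooth ℂ (MvPolynomial (Fin 4) ℂ ⧸
        Ideal.span {(X 0 * X 3 - X 1 * X 2 : MvPolynomial (Fin 4) ℂ)}) := by
  have hf : (X 0 * X 3 - X 1 * X 2 : MvPolynomial (Fin 4) ℂ) ≠ 0 := fun h ↦ by
    simpa using congr(eval ![1, 0, 0, 1] $h)
  have h := not_formallySmooth_quotient_of_singular_point (IsRegular.of_ne_zero hf).left 0
    (by simp) (fun i ↦ by fin_cases i <;> simp)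
  exact ⟨h, fun hs ↦ h hs.formallySmooth⟩
end

section
/- Let n ≥ 1 and a₁, a₂, a₃ be natural numbers, let v = (a₁/n, a₂/n, a₃/n) ∈ ℚ³, and let N be the additive subgroup of ℚ³ generated by the three standard basis vectors e₁, e₂, e₃ together with v. Let M = {x ∈ N : all three coordinates of x are ≥ 0}. Then the set of nonzero elements of M that cannot be written as the sum of two nonzero elements of M is finite and has cardinality at most n + 2. -/
/-!
Split an indecomposable `x` of `M` as `⌊x⌋ + fract x`: both summands lie in `M`, so one of them
vanishes. If `fract x = 0`, then `x` is a nonzero nonnegative integer vector, and it is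
indecomposable only if it is a standard basis vector. Otherwise `x = fract x` lies in the unit
cube, where it is determined by its class in `N / ℤ³`. That quotient is generated by `v` and
killed by `n`, so `x = fract (k • v)` for some `1 ≤ k < n`. This gives at most `3 + (n - 1)`
indecomposables.
-/

open Set

/-- For `M = N ∩ σ` this is the Hilbert basis `Hilb_N(σ)`. -/
def indecomposables {V : Type*} [AddMonoid V] (M : Set V) : Set V :=
  {x ∈ M | x ≠ 0 ∧ ¬ ∃ y ∈ M, ∃ z ∈ M, y ≠ 0 ∧ z ≠ 0 ∧ x = y + z}

def intLattice (ι : Type*) : AddSubgroup (ι → ℚ) :=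
  (AddMonoidHom.compLeft (Int.castAddHom ℚ) ι).range

section

variable {ι : Type*}

theorem mem_intLattice {x : ι → ℚ} : x ∈ intLattice ι ↔ ∃ z : ι → ℤ, (↑) ∘ z = x :=
  Iff.rfl

theorem intCast_comp_mem_intLattice (z : ι → ℤ) : ((↑) ∘ z : ι → ℚ) ∈ intLattice ι :=
  ⟨z, rfl⟩

theorem closure_range_single_eq_intLattice [Fintype ι] [DecidableEq ι] :
    AddSubgroup.closure (range fun i => Pi.single i (1 : ℚ)) = intLattice ι := by
  apply le_antisymm
  · rw [AddSubgroup.closure_le]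
    rintro _ ⟨i, rfl⟩
    exact ⟨Pi.single i 1, by ext j; simp [Pi.single_apply]⟩
  · rintro _ ⟨z, rfl⟩
    have hsum : AddMonoidHom.compLeft (Int.castAddHom ℚ) ι z = ∑ i, z i • Pi.single i 1 := by
      ext j; simp [Pi.single_apply]
    rw [hsum]
    exact AddSubgroup.sum_mem _ fun i _ =>
      AddSubgroup.zsmul_mem _ (AddSubgroup.subset_closure (mem_range_self i)) _

theorem closure_range_single_union_singleton [Fintype ι] [DecidableEq ι] (v : ι → ℚ) :
    AddSubgroup.closure (range (fun i => Pi.single i (1 : ℚ)) ∪ {v}) =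
      intLattice ι ⊔ AddSubgroup.zmultiples v := by
  rw [AddSubgroup.closure_union, closure_range_single_eq_intLattice,
    AddSubgroup.zmultiples_eq_closure]

theorem fract_comp_mem {N : AddSubgroup (ι → ℚ)} (hN : intLattice ι ≤ N) {x : ι → ℚ}
    (hx : x ∈ N) : Int.fract ∘ x ∈ N := by
  have hfloor := hN (intCast_comp_mem_intLattice (Int.floor ∘ x))
  convert N.sub_mem hx hfloor using 1
  rfl

theorem exists_fract_comp_eq_fract_comp_zsmul {v x : ι → ℚ}
    (hx : x ∈ intLattice ι ⊔ AddSubgroup.zmultiples v) :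
    ∃ k : ℤ, Int.fract ∘ x = Int.fract ∘ (k • v) := by
  obtain ⟨_, ⟨z, rfl⟩, _, ⟨k, rfl⟩, rfl⟩ := AddSubgroup.mem_sup.1 hx
  exact ⟨k, funext fun i => Int.fract_intCast_add _ _⟩

theorem fract_comp_emod_zsmul {v : ι → ℚ} {n : ℕ} (hv : n • v ∈ intLattice ι) (k : ℤ) :
    Int.fract ∘ ((k % n) • v) = Int.fract ∘ (k • v) := by
  obtain ⟨z, hz⟩ := mem_intLattice.1 hv
  ext i
  have hzi : (z i : ℚ) = n * v i := by simpa using congrFun hz i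
  have hk : (k : ℚ) = (k % n : ℤ) + n * (k / n : ℤ) := by
    exact_mod_cast (Int.emod_add_mul_ediv k n).symm
  have hshift : (k : ℚ) * v i = (k % n : ℤ) * v i + ((k / n * z i : ℤ) : ℚ) := by
    push_cast; rw [hzi]; linear_combination v i * hk
  change Int.fract ((k % n : ℤ) • v i) = Int.fract (k • v i)
  rw [zsmul_eq_mul, zsmul_eq_mul, hshift, Int.fract_add_intCast]

variable [DecidableEq ι] {N : AddSubgroup (ι → ℚ)}

theorem exists_eq_single_of_mem_intLattice (hN : intLattice ι ≤ N) {x : ι → ℚ}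
    (hx : x ∈ indecomposables {x | x ∈ N ∧ ∀ i, 0 ≤ x i}) (hxZ : x ∈ intLattice ι) :
    ∃ j, x = Pi.single j 1 := by
  obtain ⟨⟨hxN, hx_nonneg⟩, hx_ne, hx_irred⟩ := hx
  obtain ⟨j, hj⟩ := Function.ne_iff.1 hx_ne
  have hsingle_mem : Pi.single j 1 ∈ N := hN ⟨Pi.single j 1, by ext i; simp [Pi.single_apply]⟩
  have hxj : 1 ≤ x j := by
    obtain ⟨z, rfl⟩ := mem_intLattice.1 hxZ
    have h0 : 0 ≤ z j := Int.cast_nonneg_iff.1 (hx_nonneg j)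
    have h1 : z j ≠ 0 := by simpa using hj
    exact Int.cast_one_le_of_pos (by omega)
  by_contra! hne
  refine hx_irred ⟨_, ⟨hsingle_mem, fun i => ?_⟩, x - Pi.single j 1,
    ⟨N.sub_mem hxN hsingle_mem, fun i => ?_⟩, by simp, sub_ne_zero.2 (hne j), by abel⟩
  · by_cases h : i = j <;> simp [h]
  · by_cases h : i = j
    · subst h; simpa using hxj
    · simpa [h] using hx_nonneg i

theorem exists_eq_single_or_fract_comp_eq (hN : intLattice ι ≤ N) {x : ι → ℚ}
    (hx : x ∈ indecomposables {x | x ∈ N ∧ ∀ i, 0 ≤ x i}) :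
    (∃ j, x = Pi.single j 1) ∨ Int.fract ∘ x = x := by
  have hfloor := intCast_comp_mem_intLattice (Int.floor ∘ x)
  have hsplit : x = (↑) ∘ Int.floor ∘ x + Int.fract ∘ x := by
    ext i; exact (Int.floor_add_fract (x i)).symm
  by_cases hfract : Int.fract ∘ x = 0
  · rw [hfract, add_zero] at hsplit
    exact .inl (exists_eq_single_of_mem_intLattice hN hx (hsplit ▸ hfloor))
  by_cases hfloor0 : ((↑) ∘ Int.floor ∘ x : ι → ℚ) = 0
  · rw [hfloor0, zero_add] at hsplit
    exact .inr hsplit.symm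
  obtain ⟨⟨hxN, hx_nonneg⟩, -, hx_irred⟩ := hx
  exact (hx_irred ⟨_, ⟨hN hfloor, fun i => Int.cast_nonneg (Int.floor_nonneg.2 (hx_nonneg i))⟩,
    _, ⟨fract_comp_mem hN hxN, fun i => Int.fract_nonneg _⟩, hfloor0, hfract, hsplit⟩).elim

theorem indecomposables_subset {v : ι → ℚ} {n : ℕ} (hn : 0 < n) (hv : n • v ∈ intLattice ι) :
    indecomposables {x | x ∈ intLattice ι ⊔ AddSubgroup.zmultiples v ∧ ∀ i, 0 ≤ x i} ⊆
      range (fun i => Pi.single i 1) ∪ (fun k : ℕ => Int.fract ∘ (k • v)) '' Ico 1 n := by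
  intro x hx
  rcases exists_eq_single_or_fract_comp_eq le_sup_left hx with ⟨j, rfl⟩ | hfract
  · exact .inl ⟨j, rfl⟩
  obtain ⟨k, hk⟩ := exists_fract_comp_eq_fract_comp_zsmul hx.1.1
  have hx_eq : x = Int.fract ∘ ((k % n) • v) := by
    rw [← hfract, hk, fract_comp_emod_zsmul hv]
  have hk_nonneg : 0 ≤ k % n := Int.emod_nonneg _ (by omega)
  have hk_lt : k % n < n := Int.emod_lt_of_pos _ (by omega)
  have hk_ne : k % n ≠ 0 := by
    rintro h
    apply hx.2.1
    rw [hx_eq, h, zero_smul]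
    ext; simp
  refine .inr ⟨(k % n).toNat, ⟨by omega, by omega⟩, ?_⟩
  dsimp only
  rw [hx_eq, ← natCast_zsmul, Int.toNat_of_nonneg hk_nonneg]

variable [Finite ι]

theorem finite_indecomposables {v : ι → ℚ} {n : ℕ} (hn : 0 < n) (hv : n • v ∈ intLattice ι) :
    (indecomposables {x | x ∈ intLattice ι ⊔ AddSubgroup.zmultiples v ∧ ∀ i, 0 ≤ x i}).Finite :=
  ((finite_range _).union ((finite_Ico 1 n).image _)).subset (indecomposables_subset hn hv)

theorem ncard_indecomposables_le {v : ι → ℚ} {n : ℕ} (hn : 0 < n) (hv : n • v ∈ intLattice ι) :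
    (indecomposables {x | x ∈ intLattice ι ⊔ AddSubgroup.zmultiples v ∧ ∀ i, 0 ≤ x i}).ncard ≤
      Nat.card ι + (n - 1) :=
  calc _ ≤ (range (fun i => Pi.single i (1 : ℚ)) ∪
          (fun k : ℕ => Int.fract ∘ (k • v)) '' Ico 1 n).ncard :=
        ncard_le_ncard (indecomposables_subset hn hv)
          ((finite_range _).union ((finite_Ico 1 n).image _))
    _ ≤ (range (fun i => Pi.single i (1 : ℚ))).ncard +
          ((fun k : ℕ => Int.fract ∘ (k • v)) '' Ico 1 n).ncard :=
        ncard_union_le _ _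
    _ ≤ Nat.card ι + (n - 1) := by
      gcongr
      · rw [← image_univ, ← ncard_univ]; exact ncard_image_le finite_univ
      · rw [← ncard_Ico_nat]; exact ncard_image_le (finite_Ico 1 n)

end

theorem stmt_8 (n a₁ a₂ a₃ : ℕ) (hn : 1 ≤ n)
    (v : Fin 3 → ℚ) (hv : v = ![(a₁ : ℚ) / n, (a₂ : ℚ) / n, (a₃ : ℚ) / n])
    (N : AddSubgroup (Fin 3 → ℚ))
    (hN : N = AddSubgroup.closure
      {Pi.single 0 1, Pi.single 1 1, Pi.single 2 1, v})
    (M : Set (Fin 3 → ℚ)) (hM : M = {x | x ∈ N ∧ ∀ i, 0 ≤ x i}) :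
    {x ∈ M | x ≠ 0 ∧ ¬ ∃ y ∈ M, ∃ z ∈ M, y ≠ 0 ∧ z ≠ 0 ∧ x = y + z}.Finite ∧
    {x ∈ M | x ≠ 0 ∧ ¬ ∃ y ∈ M, ∃ z ∈ M, y ≠ 0 ∧ z ≠ 0 ∧ x = y + z}.ncard ≤ n + 2 := by
  have hgens : ({Pi.single 0 1, Pi.single 1 1, Pi.single 2 1, v} : Set (Fin 3 → ℚ)) =
      range (fun i => Pi.single i 1) ∪ {v} := by
    ext; simp [Fin.exists_fin_succ, eq_comm]; tauto
  have hnv : n • v ∈ intLattice (Fin 3) :=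
    mem_intLattice.2 ⟨![(a₁ : ℤ), a₂, a₃], by
      ext i; fin_cases i <;> simp [hv] <;> field_simp⟩
  rw [hgens, closure_range_single_union_singleton] at hN
  subst hN hM
  have hcard := ncard_indecomposables_le hn hnv
  rw [Nat.card_eq_fintype_card, Fintype.card_fin] at hcard
  exact ⟨finite_indecomposables hn hnv, hcard.trans (by omega)⟩
end

section
/- Let N be the additive subgroup of ℚ³ generated by the three standard basis vectors e₁, e₂, e₃ together with v₁ = (1/9, 4/9, 7/9), let M = {x ∈ N : all three coordinates of x are ≥ 0}, and let v₃ = (1/3, 1/3, 1/3) (which lies in N, being 3·v₁ − (0,1,2)). Then for each i ∈ {1,2,3}, the element uᵢ = eᵢ + v₃ lies in M and is the sum of the two nonzero elements eᵢ and v₃ of M; hence u₁, u₂, u₃ do not belong to the Hilbert basis of the cone (ℝ≥0)³ with respect to N. -/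
theorem stmt_11 (v₁ v₃ : Fin 3 → ℚ)
    (hv₁ : v₁ = ![1/9, 4/9, 7/9]) (hv₃ : v₃ = ![1/3, 1/3, 1/3])
    (N : AddSubgroup (Fin 3 → ℚ))
    (hN : N = AddSubgroup.closure
      {Pi.single 0 1, Pi.single 1 1, Pi.single 2 1, v₁})
    (M : Set (Fin 3 → ℚ)) (hM : M = {x | x ∈ N ∧ ∀ i, 0 ≤ x i}) :
    v₃ ∈ M ∧ v₃ ≠ 0 ∧
    ∀ i : Fin 3,
      (Pi.single i 1 + v₃) ∈ M ∧
      (Pi.single i 1 : Fin 3 → ℚ) ∈ M ∧ (Pi.single i 1 : Fin 3 → ℚ) ≠ 0 ∧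
      (Pi.single i 1 + v₃) ∉
        {x ∈ M | x ≠ 0 ∧ ¬ ∃ y ∈ M, ∃ z ∈ M, y ≠ 0 ∧ z ≠ 0 ∧ x = y + z} := by
  have h0 : (Pi.single 0 1 : Fin 3 → ℚ) ∈ N := by
    rw [hN]; exact AddSubgroup.subset_closure (by simp)
  have h1 : (Pi.single 1 1 : Fin 3 → ℚ) ∈ N := by
    rw [hN]; exact AddSubgroup.subset_closure (by simp)
  have h2 : (Pi.single 2 1 : Fin 3 → ℚ) ∈ N := by
    rw [hN]; exact AddSubgroup.subset_closure (by simp)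
  have hv : v₁ ∈ N := by
    rw [hN]; exact AddSubgroup.subset_closure (by simp)
  have hv3eq : v₃ = (3 : ℤ) • v₁ - Pi.single 1 1 - (2 : ℤ) • Pi.single 2 1 := by
    subst hv₁ hv₃
    funext i
    fin_cases i <;> simp [Matrix.vecHead, Matrix.vecTail, Pi.single_apply] <;> norm_num
  have hv3N : v₃ ∈ N := by
    rw [hv3eq]
    exact sub_mem (sub_mem (zsmul_mem hv 3) h1) (zsmul_mem h2 2)
  have hsingleN : ∀ i : Fin 3, (Pi.single i 1 : Fin 3 → ℚ) ∈ N := by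
    intro i; fin_cases i <;> assumption
  have hv3pos : ∀ i, 0 ≤ v₃ i := by
    intro i; subst hv₃; fin_cases i <;> norm_num
  have hv3M : v₃ ∈ M := by rw [hM]; exact ⟨hv3N, hv3pos⟩
  have hv3ne : v₃ ≠ 0 := by
    subst hv₃; intro h
    have := congrFun h 0
    norm_num at this
  refine ⟨hv3M, hv3ne, fun i => ?_⟩
  have hsM : (Pi.single i 1 : Fin 3 → ℚ) ∈ M := by
    rw [hM]
    refine ⟨hsingleN i, fun j => ?_⟩
    rcases eq_or_ne j i with h | h
    · subst h; simp
    · simp [Pi.single_eq_of_ne h]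
  have hsne : (Pi.single i 1 : Fin 3 → ℚ) ≠ 0 := by
    intro h
    have := congrFun h i
    simp at this
  have huM : (Pi.single i 1 + v₃) ∈ M := by
    rw [hM]
    rw [hM] at hsM
    exact ⟨add_mem hsM.1 hv3N, fun j => add_nonneg (hsM.2 j) (hv3pos j)⟩
  refine ⟨huM, hsM, hsne, ?_⟩
  intro hmem
  exact hmem.2.2 ⟨Pi.single i 1, hsM, v₃, hv3M, hsne, hv3ne, rfl⟩
end

section
/- Let N be the additive subgroup of ℚ³ generated by the three standard basis vectors e₁, e₂, e₃ together with v₁ = (1/14, 9/14, 11/14), and let M = {x ∈ N : all three coordinates of x are ≥ 0}. Set v₂ = (1/14)(2,4,8), v₄ = (1/14)(4,8,2), v₆ = (1/14)(6,12,10), v₈ = (1/14)(8,2,4), v₁₀ = (1/14)(10,6,12), v₁₂ = (1/14)(12,10,6) (each of which lies in M). Then v₆ = v₂ + v₄, v₁₀ = v₂ + v₈, v₁₂ = v₄ + v₈, and consequently the six elements v₆, v₁₀, v₁₂, e₁ + v₄, e₂ + v₂, e₃ + v₈ are each the sum of two nonzero elements of M, hence none of them belongs to the Hilbert basis of the cone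 (ℝ≥0)³ with respect to N. -/
/-!
With `e₁, e₂, e₃` the standard basis, `N = ℤ³ + ℤ v₁`, and the nonnegative part `M` of `N` is closed
under addition. For every integer `k` the coordinatewise fractional part of `k v₁` is
`k v₁ - ⌊k v₁⌋ ∈ N` and is nonnegative, hence lies in `M`; the vectors `v₂, v₄, v₈` are of this form.
So `M` contains `v₆ = v₂ + v₄`, `v₁₀ = v₂ + v₈`, `v₁₂ = v₄ + v₈`, and each of the six listed vectors is
a sum of two nonzero elements of `M` (the `eᵢ` and the `vⱼ`).
-/

section HilbertBasis

variable {A : Type*} [Add A] [Zero A]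

def Decomposable (M : Set A) (x : A) : Prop :=
  ∃ y ∈ M, ∃ z ∈ M, y ≠ 0 ∧ z ≠ 0 ∧ x = y + z

def hilbertBasis (M : Set A) : Set A :=
  {x ∈ M | x ≠ 0 ∧ ¬ Decomposable M x}

theorem decomposable_add {M : Set A} {y z : A} (hy : y ∈ M) (hz : z ∈ M) (hy₀ : y ≠ 0)
    (hz₀ : z ≠ 0) : Decomposable M (y + z) :=
  ⟨y, hy, z, hz, hy₀, hz₀, rfl⟩

theorem Decomposable.notMem_hilbertBasis {M : Set A} {x : A} (h : Decomposable M x) :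
    x ∉ hilbertBasis M :=
  fun hx => hx.2.2 h

end HilbertBasis

namespace AddSubgroup

variable {ι α : Type*}

def nonnegPart [AddCommGroup α] [PartialOrder α] [IsOrderedAddMonoid α]
    (N : AddSubgroup (ι → α)) : AddSubmonoid (ι → α) where
  carrier := {x | x ∈ N ∧ ∀ i, 0 ≤ x i}
  add_mem' hx hy := ⟨N.add_mem hx.1 hy.1, fun i => add_nonneg (hx.2 i) (hy.2 i)⟩
  zero_mem' := ⟨N.zero_mem, fun _ => le_rfl⟩

theorem single_one_mem_nonnegPart [DecidableEq ι] [Ring α] [PartialOrder α] [IsOrderedRing α]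
    {N : AddSubgroup (ι → α)} {i : ι} (h : Pi.single i 1 ∈ N) : Pi.single i 1 ∈ N.nonnegPart :=
  ⟨h, Pi.single_nonneg.2 zero_le_one⟩

theorem intCast_comp_mem [DecidableEq ι] [Fintype ι] [AddCommGroupWithOne α]
    {N : AddSubgroup (ι → α)} (he : ∀ i, Pi.single i 1 ∈ N) (n : ι → ℤ) :
    (fun i => (n i : α)) ∈ N := by
  rw [← Finset.univ_sum_single fun i => (n i : α)]
  exact sum_mem fun i _ => by
    simpa only [← Pi.single_zsmul, zsmul_one] using zsmul_mem (he i) (n i)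

theorem fract_mem_nonnegPart [DecidableEq ι] [Fintype ι] [Ring α] [LinearOrder α]
    [IsStrictOrderedRing α] [FloorRing α] {N : AddSubgroup (ι → α)}
    (he : ∀ i, Pi.single i 1 ∈ N) {v : ι → α} (hv : v ∈ N) (k : ℤ) :
    (fun i => Int.fract (k * v i)) ∈ N.nonnegPart := by
  have hsub : (fun i => Int.fract (k * v i)) = k • v - fun i => (⌊k * v i⌋ : α) := by
    ext i; rw [Pi.sub_apply, Pi.smul_apply, zsmul_eq_mul]; rfl
  exact ⟨hsub ▸ sub_mem (zsmul_mem hv k) (intCast_comp_mem he _), fun _ => Int.fract_nonneg _⟩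

end AddSubgroup

open AddSubgroup

theorem stmt_12 (v₁ v₂ v₄ v₆ v₈ v₁₀ v₁₂ : Fin 3 → ℚ)
    (hv₁ : v₁ = ![1/14, 9/14, 11/14])
    (hv₂ : v₂ = ![2/14, 4/14, 8/14])
    (hv₄ : v₄ = ![4/14, 8/14, 2/14])
    (hv₆ : v₆ = ![6/14, 12/14, 10/14])
    (hv₈ : v₈ = ![8/14, 2/14, 4/14])
    (hv₁₀ : v₁₀ = ![10/14, 6/14, 12/14])
    (hv₁₂ : v₁₂ = ![12/14, 10/14, 6/14])
    (N : AddSubgroup (Fin 3 → ℚ))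
    (hN : N = AddSubgroup.closure
      {Pi.single 0 1, Pi.single 1 1, Pi.single 2 1, v₁})
    (M : Set (Fin 3 → ℚ)) (hM : M = {x | x ∈ N ∧ ∀ i, 0 ≤ x i}) :
    v₂ ∈ M ∧ v₄ ∈ M ∧ v₆ ∈ M ∧ v₈ ∈ M ∧ v₁₀ ∈ M ∧ v₁₂ ∈ M ∧
    v₆ = v₂ + v₄ ∧ v₁₀ = v₂ + v₈ ∧ v₁₂ = v₄ + v₈ ∧
    (∀ x ∈ ({v₆, v₁₀, v₁₂, Pi.single 0 1 + v₄, Pi.single 1 1 + v₂,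
        Pi.single 2 1 + v₈} : Set (Fin 3 → ℚ)),
      (∃ y ∈ M, ∃ z ∈ M, y ≠ 0 ∧ z ≠ 0 ∧ x = y + z) ∧
      x ∉ {x ∈ M | x ≠ 0 ∧ ¬ ∃ y ∈ M, ∃ z ∈ M, y ≠ 0 ∧ z ≠ 0 ∧ x = y + z}) := by
  obtain rfl : M = N.nonnegPart := hM
  have he : ∀ i, Pi.single i 1 ∈ N := fun i => hN ▸ subset_closure (by fin_cases i <;> simp)
  have hv₁N : v₁ ∈ N := hN ▸ subset_closure (by simp)
  have hfract : ∀ (k : ℤ) {v}, v = (fun i => Int.fract (k * v₁ i)) → v ∈ N.nonnegPart :=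
    fun k _ hv => hv ▸ fract_mem_nonnegPart he hv₁N k
  have hv₂M : v₂ ∈ N.nonnegPart :=
    hfract 2 (by rw [hv₁, hv₂]; ext i; fin_cases i <;> norm_num [Int.fract])
  have hv₄M : v₄ ∈ N.nonnegPart :=
    hfract 4 (by rw [hv₁, hv₄]; ext i; fin_cases i <;> norm_num [Int.fract])
  have hv₈M : v₈ ∈ N.nonnegPart :=
    hfract 8 (by rw [hv₁, hv₈]; ext i; fin_cases i <;> norm_num [Int.fract])
  have h₆ : v₆ = v₂ + v₄ := by rw [hv₂, hv₄, hv₆]; ext i; fin_cases i <;> norm_num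
  have h₁₀ : v₁₀ = v₂ + v₈ := by rw [hv₂, hv₈, hv₁₀]; ext i; fin_cases i <;> norm_num
  have h₁₂ : v₁₂ = v₄ + v₈ := by rw [hv₄, hv₈, hv₁₂]; ext i; fin_cases i <;> norm_num
  have hv₂₀ : v₂ ≠ 0 := Function.ne_iff.2 ⟨0, by norm_num [hv₂]⟩
  have hv₄₀ : v₄ ≠ 0 := Function.ne_iff.2 ⟨0, by norm_num [hv₄]⟩
  have hv₈₀ : v₈ ≠ 0 := Function.ne_iff.2 ⟨0, by norm_num [hv₈]⟩
  have he₀ : ∀ i, (Pi.single i 1 : Fin 3 → ℚ) ≠ 0 := fun i => Pi.single_ne_zero_iff.2 one_ne_zero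
  have hdec : ∀ x ∈ ({v₆, v₁₀, v₁₂, Pi.single 0 1 + v₄, Pi.single 1 1 + v₂,
      Pi.single 2 1 + v₈} : Set (Fin 3 → ℚ)), Decomposable (N.nonnegPart : Set _) x := by
    rintro x (rfl | rfl | rfl | rfl | rfl | rfl)
    · exact h₆ ▸ decomposable_add hv₂M hv₄M hv₂₀ hv₄₀
    · exact h₁₀ ▸ decomposable_add hv₂M hv₈M hv₂₀ hv₈₀
    · exact h₁₂ ▸ decomposable_add hv₄M hv₈M hv₄₀ hv₈₀
    · exact decomposable_add (single_one_mem_nonnegPart (he 0)) hv₄M (he₀ 0) hv₄₀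
    · exact decomposable_add (single_one_mem_nonnegPart (he 1)) hv₂M (he₀ 1) hv₂₀
    · exact decomposable_add (single_one_mem_nonnegPart (he 2)) hv₈M (he₀ 2) hv₈₀
  exact ⟨hv₂M, hv₄M, h₆ ▸ add_mem hv₂M hv₄M, hv₈M, h₁₀ ▸ add_mem hv₂M hv₈M,
    h₁₂ ▸ add_mem hv₄M hv₈M, h₆, h₁₀, h₁₂, fun x hx => ⟨hdec x hx, (hdec x hx).notMem_hilbertBasis⟩⟩
end
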